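/- Let n ≥ 2, c > 0, and let L_u be the n×n Laplacian of the uniformly weighted line graph. For every integer k with 1 ≤ k ≤ n, the vector v_k ∈ ℝⁿ with entries v_k(j) = sin((2j−1)kπ/(2n)) for j = 1, …, n satisfies (L_u + 2c·e₁e₁ᵀ + 2c·e_ne_nᵀ) v_k = 2c(1 − cos(kπ/n)) v_k. Hence the DST-2 basis vectors are eigenvectors of the generalized graph Laplacian of the line graph with self-loops of weight 2c at both the first and last vertices. -/

import Mathlib

open Matrix Real

/-!
Extend `v_k` to all integers `j` by the same formula `v_k(j) = sin ((2j+1) x)`, `x = kπ/(2n)`.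
Then `v_k(-1) = -v_k(0)` and, since `2n x = kπ`, also `v_k(n) = -v_k(n-1)`. So a self-loop of
weight `2c` at an end vertex acts exactly like an edge of weight `c` to a ghost vertex carrying
this reflected value, and every row of the loaded Laplacian becomes the second difference
`c (2 v(j) - v(j-1) - v(j+1))`, which maps `sin ((2j+1) x)` to `2c (1 - cos 2x) sin ((2j+1) x)`.
-/

/-- The combinatorial Laplacian of the uniformly weighted line graph on `n` vertices with
edge weight `c`. -/
def lineLaplacian (n : ℕ) (c : ℝ) : Matrix (Fin n) (Fin n) ℝ :=
  Matrix.of fun i j =>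
    if i = j then (if i.val = 0 ∨ i.val = n - 1 then c else 2 * c)
    else if i.val + 1 = j.val ∨ j.val + 1 = i.val then -c else 0

theorem Matrix.mulVec_apply_eq_sum_of_row_support {m R : Type*} [Fintype m]
    [NonUnitalNonAssocSemiring R] {A : Matrix m m R} {i : m} {s : Finset m}
    (h : ∀ j ∉ s, A i j = 0) (v : m → R) :
    (A *ᵥ v) i = ∑ j ∈ s, A i j * v j :=
  (Finset.sum_subset (Finset.subset_univ s) fun j _ hj => by simp [h j hj]).symm

theorem lineLaplacian_apply_of_not_adj {n : ℕ} (c : ℝ) {i j : Fin n} (h : i.val ≠ j.val)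
    (h' : ¬(i.val + 1 = j.val ∨ j.val + 1 = i.val)) : lineLaplacian n c i j = 0 := by
  simp [lineLaplacian, Fin.ext_iff, h, h']

theorem lineLaplacian_mulVec_apply {n : ℕ} (hn : 2 ≤ n) (c : ℝ) (f : ℤ → ℝ) (i : Fin n) :
    (lineLaplacian n c *ᵥ fun j => f j) i =
      c * (2 * f i - f (i - 1) - f (i + 1))
        - (if i.val = 0 then c * (f 0 - f (-1)) else 0)
        - (if i.val = n - 1 then c * (f (n - 1) - f n) else 0) := by
  obtain ⟨i, hi⟩ := i
  rcases Nat.eq_zero_or_pos i with rfl | hpos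
  · rw [mulVec_apply_eq_sum_of_row_support (s := {⟨0, hi⟩, ⟨1, hn⟩}), Finset.sum_pair (by simp)]
    · simp [lineLaplacian, if_neg (show 0 ≠ n - 1 by omega)]
      ring
    · intro j hj
      simp only [Finset.mem_insert, Finset.mem_singleton, Fin.ext_iff] at hj
      exact lineLaplacian_apply_of_not_adj c (by simp only; omega) (by simp only; omega)
  rcases eq_or_lt_of_le (Nat.le_sub_one_of_lt hi) with rfl | hlt
  · rw [mulVec_apply_eq_sum_of_row_support (s := {⟨n - 2, by omega⟩, ⟨n - 1, hi⟩}),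
      Finset.sum_pair (by simp [Fin.ext_iff]; omega)]
    · simp [lineLaplacian, Fin.ext_iff, show n - 1 ≠ 0 by omega, show n - 1 ≠ n - 2 by omega,
        show n - 2 + 1 = n - 1 by omega, Nat.cast_sub (show 1 ≤ n by omega), Nat.cast_sub hn]
      ring_nf
    · intro j hj
      simp only [Finset.mem_insert, Finset.mem_singleton, Fin.ext_iff] at hj
      exact lineLaplacian_apply_of_not_adj c (by simp only; omega) (by simp only; omega)
  · rw [mulVec_apply_eq_sum_of_row_support
        (s := {⟨i - 1, by omega⟩, ⟨i, hi⟩, ⟨i + 1, by omega⟩}),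
      Finset.sum_insert (by simp [Fin.ext_iff]; omega), Finset.sum_pair (by simp)]
    · simp [lineLaplacian, Fin.ext_iff, hpos.ne', hlt.ne, show i ≠ i - 1 by omega,
        show i - 1 + 1 = i by omega, Nat.cast_sub (show 1 ≤ i by omega)]
      ring
    · intro j hj
      simp only [Finset.mem_insert, Finset.mem_singleton, Fin.ext_iff] at hj
      exact lineLaplacian_apply_of_not_adj c (by simp only; omega) (by simp only; omega)

theorem lineLaplacian_add_loops_mulVec_apply {n : ℕ} (hn : 2 ≤ n) (c w₁ w₂ : ℝ) (f : ℤ → ℝ)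
    (h₀ : w₁ * f 0 = c * (f 0 - f (-1))) (h₁ : w₂ * f (n - 1) = c * (f (n - 1) - f n))
    (i : Fin n) :
    ((lineLaplacian n c + single ⟨0, Nat.zero_lt_of_lt hn⟩ ⟨0, Nat.zero_lt_of_lt hn⟩ w₁ +
        single ⟨n - 1, Nat.sub_one_lt_of_lt hn⟩ ⟨n - 1, Nat.sub_one_lt_of_lt hn⟩ w₂) *ᵥ
          fun j : Fin n => f j) i =
      c * (2 * f i - f (i - 1) - f (i + 1)) := by
  rw [add_mulVec, add_mulVec, Pi.add_apply, Pi.add_apply, single_mulVec, single_mulVec,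
    lineLaplacian_mulVec_apply hn]
  obtain ⟨i, hi⟩ := i
  have hends : 0 ≠ n - 1 := by omega
  by_cases h0 : i = 0
  · subst h0
    simp [hends]
    linarith
  by_cases hlast : i = n - 1
  · subst hlast
    simp [hends.symm, Nat.cast_sub (show 1 ≤ n by omega)]
    linarith
  · simp [h0, hlast]

theorem Real.two_mul_sin_sub_sin_sub_sub_sin_add (x y : ℝ) :
    2 * sin y - sin (y - x) - sin (y + x) = 2 * (1 - cos x) * sin y := by
  rw [sin_sub, sin_add]; ring

noncomputable def dst2Vector (n k : ℕ) (j : ℤ) : ℝ :=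
  sin ((2 * j + 1) * k * π / (2 * n))

theorem dst2Vector_neg_one (n k : ℕ) : dst2Vector n k (-1) = -dst2Vector n k 0 := by
  rw [dst2Vector, dst2Vector, ← sin_neg]
  congr 1
  push_cast
  ring

theorem dst2Vector_self {n : ℕ} (hn : n ≠ 0) (k : ℕ) :
    dst2Vector n k n = -dst2Vector n k (n - 1) := by
  have h := two_mul_sin_mul_cos (k * π) (k * π / (2 * n))
  rw [sin_nat_mul_pi, mul_zero, zero_mul] at h
  have hn' : (n : ℝ) ≠ 0 := Nat.cast_ne_zero.mpr hn
  have e₁ : (2 * ((n : ℤ) : ℝ) + 1) * k * π / (2 * n) = k * π + k * π / (2 * n) := by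
    field_simp; push_cast; ring
  have e₂ : (2 * (((n : ℤ) - 1 : ℤ) : ℝ) + 1) * k * π / (2 * n) = k * π - k * π / (2 * n) := by
    field_simp; push_cast; ring
  rw [dst2Vector, dst2Vector, e₁, e₂]
  linarith

theorem two_mul_dst2Vector_sub_sub_add (n k : ℕ) (j : ℤ) :
    2 * dst2Vector n k j - dst2Vector n k (j - 1) - dst2Vector n k (j + 1) =
      2 * (1 - cos (k * π / n)) * dst2Vector n k j := by
  rw [dst2Vector, dst2Vector, dst2Vector,
    ← Real.two_mul_sin_sub_sin_sub_sub_sin_add (k * π / n)]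
  push_cast
  ring_nf

/-- DST-2 basis vectors are eigenvectors of the line graph Laplacian with self-loops of weight `2c` at both the first and last vertices. For `1 ≤ k ≤ n` the given vector is an eigenvector
with the stated eigenvalue. -/
theorem dst2_eigenvectors (n : ℕ) (hn : 2 ≤ n) (c : ℝ)
    (k : ℕ) :
    (lineLaplacian n c + Matrix.single (⟨0, by omega⟩ : Fin n) ⟨0, by omega⟩ (2 * c) + Matrix.single (⟨n - 1, by omega⟩ : Fin n) ⟨n - 1, by omega⟩ (2 * c)) *ᵥ
        (fun j : Fin n => Real.sin ((2 * (j : ℝ) + 1) * (k : ℝ) * Real.pi / (2 * n))) =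
      (2 * c * (1 - Real.cos ((k : ℝ) * Real.pi / n))) •
        (fun j : Fin n => Real.sin ((2 * (j : ℝ) + 1) * (k : ℝ) * Real.pi / (2 * n))) := by
  have hv : (fun j : Fin n => sin ((2 * (j : ℝ) + 1) * k * π / (2 * n))) =
      fun j : Fin n => dst2Vector n k j := by
    ext j; simp [dst2Vector]
  ext i
  rw [hv, lineLaplacian_add_loops_mulVec_apply hn c _ _ _ (by rw [dst2Vector_neg_one]; ring)
      (by rw [dst2Vector_self (by omega)]; ring),
    Pi.smul_apply, smul_eq_mul, two_mul_dst2Vector_sub_sub_add]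
  ring
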